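/- Let g(t) = Σ_{n≥0} g_n t^n with g_0 ≠ 0 and f(t) = Σ_{n≥1} f_n t^n with f_1 ≠ 0 be real formal power series, and let d(t) = d_0 + d_1 t with d_0, d_1 ≥ 0. If the Riordan array (g, f) is totally positive, then the almost-Riordan array (d_0 + d_1 t | g, f) is totally positive. -/

import Mathlib

/-- An infinite real matrix is totally positive if all its minors
(determinants of submatrices with strictly increasing rows/columns) are
nonnegative. -/
def TotallyPositive (M : ℕ → ℕ → ℝ) : Prop :=
  ∀ (k : ℕ) (r c : Fin k → ℕ), StrictMono r → StrictMono c →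
    0 ≤ (Matrix.of fun a b => M (r a) (c b)).det

/-- The Riordan array `(g, f)`: its `(n,k)` entry is the coefficient of `t^n`
in `g(t) * f(t)^k`. -/
noncomputable def riordan (g f : PowerSeries ℝ) : ℕ → ℕ → ℝ :=
  fun n k => PowerSeries.coeff (R := ℝ) n (g * f ^ k)

/-- The almost-Riordan array `(d | g, f)`: its `(n,0)` entry is `d_n`, and its
`(n,k)` entry for `k ≥ 1` is the coefficient of `t^n` in `t * g(t) * f(t)^(k-1)`. -/
noncomputable def almostRiordan (d g f : PowerSeries ℝ) : ℕ → ℕ → ℝ :=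
  fun n k =>
    if k = 0 then PowerSeries.coeff (R := ℝ) n d
    else PowerSeries.coeff (R := ℝ) n (PowerSeries.X * g * f ^ (k - 1))

private lemma aR_zero (d g f : PowerSeries ℝ) (k : ℕ) (hk : k ≠ 0) :
    almostRiordan d g f 0 k = 0 := by
  simp [almostRiordan, hk, PowerSeries.coeff_zero_eq_constantCoeff, map_mul]

private lemma aR_entry (d g f : PowerSeries ℝ) (n k : ℕ) (hn : n ≠ 0) (hk : k ≠ 0) :
    almostRiordan d g f n k = riordan g f (n - 1) (k - 1) := by
  obtain ⟨m, rfl⟩ := Nat.exists_eq_succ_of_ne_zero hn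
  simp only [almostRiordan, riordan, if_neg hk, mul_assoc]
  rw [PowerSeries.coeff_succ_X_mul]
  rfl

private lemma key (d g f : PowerSeries ℝ)
    (hTP : TotallyPositive (riordan g f))
    (m : ℕ) (r c : Fin m → ℕ) (hr : StrictMono r) (hc : StrictMono c)
    (hr1 : ∀ a, 1 ≤ r a) (hc1 : ∀ b, 1 ≤ c b) :
    0 ≤ (Matrix.of fun a b => almostRiordan d g f (r a) (c b)).det := by
  have h : (Matrix.of fun a b => almostRiordan d g f (r a) (c b))
      = Matrix.of fun a b => riordan g f (r a - 1) (c b - 1) := by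
    ext a b
    simp only [Matrix.of_apply]
    exact aR_entry d g f _ _ (by have := hr1 a; omega) (by have := hc1 b; omega)
  rw [h]
  exact hTP m (fun a => r a - 1) (fun b => c b - 1)
    (fun a b hab => show r a - 1 < r b - 1 by have := hr1 a; have := hr hab; omega)
    (fun a b hab => show c a - 1 < c b - 1 by have := hc1 a; have := hc hab; omega)

theorem tp_almostRiordan_linear_d
    (g f : PowerSeries ℝ)
    (hg : PowerSeries.constantCoeff (R := ℝ) g ≠ 0)
    (hf0 : PowerSeries.coeff (R := ℝ) 0 f = 0)
    (hf1 : PowerSeries.coeff (R := ℝ) 1 f ≠ 0)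
    (d₀ d₁ : ℝ) (hd₀ : 0 ≤ d₀) (hd₁ : 0 ≤ d₁)
    (hTP : TotallyPositive (riordan g f)) :
    TotallyPositive
      (almostRiordan (PowerSeries.C (R := ℝ) d₀ + PowerSeries.C (R := ℝ) d₁ * PowerSeries.X) g f) := by
  set d : PowerSeries ℝ := PowerSeries.C (R := ℝ) d₀ + PowerSeries.C (R := ℝ) d₁ * PowerSeries.X with hd
  intro k r c hr hc
  match k with
  | 0 => simp [Matrix.det_fin_zero]
  | (m+1) =>
    by_cases hc0 : c 0 = 0
    · rw [Matrix.det_succ_column_zero]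
      apply Finset.sum_nonneg
      intro i _
      simp only [Matrix.of_apply]
      by_cases hri0 : r i = 0
      · -- i must be 0, entry is d₀
        have hi : i = 0 := by
          by_contra h
          have := hr (Fin.pos_of_ne_zero h)
          omega
        subst hi
        have hM : almostRiordan d g f (r 0) (c 0) = d₀ := by
          simp [almostRiordan, hc0, hri0, hd]
        rw [hM]
        have hsub : ((Matrix.of fun a b => almostRiordan d g f (r a) (c b)).submatrix
            (Fin.succAbove 0) Fin.succ)
            = Matrix.of (fun (a : Fin m) b => almostRiordan d g f (r a.succ) (c b.succ)) := by
          ext a b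
          simp [Fin.succAbove_zero]
        rw [hsub]
        simp only [Fin.val_zero, pow_zero, one_mul]
        refine mul_nonneg hd₀ (key d g f hTP m _ _
          (fun a b hab => hr (Fin.succ_lt_succ_iff.mpr hab))
          (fun a b hab => hc (Fin.succ_lt_succ_iff.mpr hab)) ?_ ?_)
        · intro a; have := hr (Fin.succ_pos a); omega
        · intro b; have := hc (Fin.succ_pos b); omega
      · by_cases hri1 : r i = 1
        · by_cases hi : i = 0
          · subst hi
            have hM : almostRiordan d g f (r 0) (c 0) = d₁ := by
              simp [almostRiordan, hc0, hri1, hd, PowerSeries.coeff_C, PowerSeries.coeff_X]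
            rw [hM]
            have hsub : ((Matrix.of fun a b => almostRiordan d g f (r a) (c b)).submatrix
                (Fin.succAbove 0) Fin.succ)
                = Matrix.of (fun (a : Fin m) b => almostRiordan d g f (r a.succ) (c b.succ)) := by
              ext a b
              simp [Fin.succAbove_zero]
            rw [hsub]
            simp only [Fin.val_zero, pow_zero, one_mul]
            refine mul_nonneg hd₁ (key d g f hTP m _ _
              (fun a b hab => hr (Fin.succ_lt_succ_iff.mpr hab))
              (fun a b hab => hc (Fin.succ_lt_succ_iff.mpr hab)) ?_ ?_)
            · intro a; have := hr (Fin.succ_pos a); omega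
            · intro b; have := hc (Fin.succ_pos b); omega
          · -- submatrix has a zero row
            have h0 : r 0 = 0 := by
              have := hr (Fin.pos_of_ne_zero hi)
              omega
            have hmpos : 0 < m := by
              have h1 : 1 ≤ (i : ℕ) :=
                Nat.one_le_iff_ne_zero.mpr (fun h => hi (Fin.ext (by simp [h])))
              have := i.isLt
              omega
            have hdet : ((Matrix.of fun a b => almostRiordan d g f (r a) (c b)).submatrix
                i.succAbove Fin.succ).det = 0 := by
              apply Matrix.det_eq_zero_of_row_eq_zero ⟨0, hmpos⟩
              intro j
              have hsa : i.succAbove ⟨0, hmpos⟩ = 0 := by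
                rw [Fin.succAbove_of_castSucc_lt _ _ (by
                  exact Fin.lt_def.mpr (lt_of_eq_of_lt (by simp) (Fin.lt_def.mp (Fin.pos_of_ne_zero hi))))]
                rfl
              rw [Matrix.submatrix_apply, hsa, Matrix.of_apply, h0]
              exact aR_zero d g f _ (by have := hc (Fin.succ_pos j); omega)
            rw [hdet, mul_zero]
        · -- entry is 0
          have hM : almostRiordan d g f (r i) (c 0) = 0 := by
            simp [almostRiordan, hc0, hd, PowerSeries.coeff_C, PowerSeries.coeff_X,
              hri0, hri1]
          rw [hM, mul_zero, zero_mul]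
    · -- column indices all ≥ 1
      have hc1 : ∀ b, 1 ≤ c b := by
        intro b
        have := hc.monotone (Fin.zero_le b)
        omega
      by_cases hr0 : r 0 = 0
      · have : (Matrix.of fun a b => almostRiordan d g f (r a) (c b)).det = 0 := by
          apply Matrix.det_eq_zero_of_row_eq_zero 0
          intro j
          rw [Matrix.of_apply, hr0]
          exact aR_zero d g f _ (by have := hc1 j; omega)
        rw [this]
      · exact key d g f hTP _ r c hr hc
          (fun a => by have := hr.monotone (Fin.zero_le a); omega) hc1
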